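/- Let S ⊆ ℕ have positive arithmetic density d_S > 0, and suppose f_S(q) = 1 + Σ_{n∈S} q^n is analytic and has no zeros on the open unit disk. Then lim_{q→1⁻} Σ_{n≥0} C_S(n) q^n = 1/d_S, where the limit is taken radially. -/

import Mathlib

/-!
Formally, `1 / f_S = 1 / (1 + g)` with `g = ∑_{s ∈ S} Xˢ` has coefficients
`c(n) = ∑_k (-1)ᵏ [Xⁿ] gᵏ`, a signed sum of multinomial coefficients over partitions of `n` with
parts in `S`; removing one part gives the recursion `c(n) = -∑_{s ∈ S, s ≤ n} c(n - s)`, i.e.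
`f_S · ∑ c(n) Xⁿ = 1`. As `f_S` has no zeros in the unit disk, `1 / f_S` is holomorphic there and
its Taylor series, which must be this formal inverse, converges on the whole disk. Since `C_S(n)`
are the partial sums of `c`, this gives `∑ C_S(n) qⁿ = 1 / ((1 - q) f_S(q))` for `|q| < 1`.
Finally `(1 - q) f_S(q) = (1 - q)² ∑_N (1 + #(S ∩ [0, N])) qᴺ → d` as `q → 1⁻`, because
`#(S ∩ [0, N]) ~ d N`.
-/

open Filter
open scoped Classical

/-- The alternating partition sum `C_S(n)` over partitions with all parts in `S`
and size at most `n`. -/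
noncomputable def CS (S : Set ℕ) (n : ℕ) : ℚ :=
  ∑ j ∈ Finset.range (n + 1),
    ∑ p ∈ Finset.univ.filter (fun p : Nat.Partition j => ∀ i ∈ p.parts, i ∈ S),
      ((-1 : ℚ) ^ p.parts.card * (Nat.factorial p.parts.card : ℚ) /
        ∏ i ∈ Finset.Icc 1 n, (Nat.factorial (p.parts.count i) : ℚ))

open Finset PowerSeries
open scoped Nat NNReal ENNReal Topology

section SignedMultinomial

variable {α : Type*} [DecidableEq α]

lemma prod_factorial_count_cons (i : α) (m : Multiset α) :
    ∏ j ∈ (i ::ₘ m).toFinset, ((i ::ₘ m).count j)! =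
      (m.count i + 1) * ∏ j ∈ m.toFinset, (m.count j)! := by
  set T := (i ::ₘ m).toFinset
  have hi : i ∈ T := by simp [T]
  have hsub : m.toFinset ⊆ T := by simp [T, Multiset.toFinset_cons, Finset.subset_insert]
  rw [Finset.prod_subset (f := fun j => (m.count j)!) hsub fun j _ hj => by
    rw [Multiset.count_eq_zero_of_notMem (by simpa using hj), Nat.factorial_zero]]
  rw [← Finset.mul_prod_erase T _ hi, ← Finset.mul_prod_erase T _ hi, Multiset.count_cons_self,
    Nat.factorial_succ, mul_assoc]
  congr 2
  exact Finset.prod_congr rfl fun j hj => by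
    rw [Multiset.count_cons_of_ne (Finset.ne_of_mem_erase hj)]

noncomputable def signedMultinomial (m : Multiset α) : ℚ :=
  (-1) ^ Multiset.card m * (Multiset.card m)! / ∏ i ∈ m.toFinset, ((m.count i)! : ℚ)

lemma signedMultinomial_erase_mul_card {m : Multiset α} {i : α} (hi : i ∈ m) :
    signedMultinomial (m.erase i) * Multiset.card m = -(signedMultinomial m * m.count i) := by
  obtain ⟨m, rfl⟩ := Multiset.exists_cons_of_mem hi
  have hprod := congrArg (Nat.cast (R := ℚ)) (prod_factorial_count_cons i m)
  have hpos : (∏ j ∈ m.toFinset, ((m.count j)! : ℚ)) ≠ 0 :=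
    Finset.prod_ne_zero_iff.mpr fun j _ => by positivity
  push_cast at hprod
  simp only [signedMultinomial, Multiset.erase_cons_head, Multiset.card_cons,
    Multiset.count_cons_self, hprod, Nat.factorial_succ]
  field_simp
  push_cast
  ring

lemma sum_signedMultinomial_erase {m : Multiset α} (hm : m ≠ 0) :
    ∑ i ∈ m.toFinset, signedMultinomial (m.erase i) = -signedMultinomial m := by
  have hcard : (Multiset.card m : ℚ) ≠ 0 := by simpa using hm
  refine mul_right_cancel₀ hcard ?_
  rw [Finset.sum_mul, Finset.sum_congr rfl fun i hi =>
      signedMultinomial_erase_mul_card (Multiset.mem_toFinset.mp hi),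
    Finset.sum_neg_distrib, ← Finset.mul_sum, ← Nat.cast_sum, Multiset.toFinset_sum_count_eq,
    neg_mul]

end SignedMultinomial

section PartitionWeight

variable (S : Set ℕ)

noncomputable def partsIn (n : ℕ) : Finset (Multiset ℕ) :=
  (univ.filter fun p : Nat.Partition n => ∀ i ∈ p.parts, i ∈ S).image (·.parts)

noncomputable def partitionWeight (n : ℕ) : ℚ :=
  ∑ m ∈ partsIn S n, signedMultinomial m

variable {S}

lemma mem_partsIn {n : ℕ} {m : Multiset ℕ} :
    m ∈ partsIn S n ↔ m.sum = n ∧ ∀ i ∈ m, i ∈ S ∧ 0 < i := by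
  simp only [partsIn, mem_image, mem_filter, mem_univ, true_and]
  constructor
  · rintro ⟨p, hp, rfl⟩
    exact ⟨p.parts_sum, fun i hi => ⟨hp i hi, p.parts_pos hi⟩⟩
  · rintro ⟨hsum, h⟩
    exact ⟨⟨m, fun hi => (h _ hi).2, hsum⟩, fun i hi => (h i hi).1, rfl⟩

lemma partsIn_zero : partsIn S 0 = {0} := by
  ext m
  simp only [mem_partsIn, mem_singleton, Multiset.sum_eq_zero_iff]
  constructor
  · rintro ⟨hsum, h⟩
    exact Multiset.eq_zero_of_forall_notMem fun i hi => (h i hi).2.ne' (hsum i hi)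
  · rintro rfl
    simp

lemma partitionWeight_zero : partitionWeight S 0 = 1 := by
  simp [partitionWeight, partsIn_zero, signedMultinomial]

/-- Removing a part `i` from a partition of `n` leaves a partition of `n - i`; by
`sum_signedMultinomial_erase` the weights of all such pairs add up to `-partitionWeight S n`. -/
lemma partitionWeight_eq_neg_sum {n : ℕ} (hn : 0 < n) :
    partitionWeight S n = -∑ i ∈ (Icc 1 n).filter (· ∈ S), partitionWeight S (n - i) := by
  have hcons : ∑ i ∈ (Icc 1 n).filter (· ∈ S), partitionWeight S (n - i) =
      ∑ m ∈ partsIn S n, ∑ i ∈ m.toFinset, signedMultinomial (m.erase i) := by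
    simp only [partitionWeight, Finset.sum_sigma']
    refine Finset.sum_nbij' (fun x => ⟨x.1 ::ₘ x.2, x.1⟩) (fun x => ⟨x.2, x.1.erase x.2⟩)
      ?_ ?_ ?_ ?_ ?_
    · rintro ⟨i, m⟩ hx
      simp only [mem_sigma, mem_filter, mem_Icc, mem_partsIn] at hx ⊢
      refine ⟨⟨by rw [Multiset.sum_cons, hx.2.1]; omega, fun j hj => ?_⟩, by simp⟩
      rcases Multiset.mem_cons.mp hj with rfl | hj
      exacts [⟨hx.1.2, by omega⟩, hx.2.2 j hj]
    · rintro ⟨m, i⟩ hx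
      simp only [mem_sigma, mem_filter, mem_Icc, mem_partsIn, Multiset.mem_toFinset] at hx ⊢
      obtain ⟨⟨hsum, hparts⟩, hi⟩ := hx
      have hle : i ≤ n := hsum ▸ Multiset.le_sum_of_mem hi
      have hsplit := congrArg Multiset.sum (Multiset.cons_erase hi)
      rw [Multiset.sum_cons, hsum] at hsplit
      exact ⟨⟨⟨(hparts i hi).2, hle⟩, (hparts i hi).1⟩, by omega,
        fun j hj => hparts j (Multiset.mem_of_mem_erase hj)⟩
    · rintro ⟨i, m⟩ _
      simp
    · rintro ⟨m, i⟩ hx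
      simp only [mem_sigma, Multiset.mem_toFinset] at hx
      simp [Multiset.cons_erase hx.2]
    · rintro ⟨i, m⟩ _
      simp
  rw [hcons, partitionWeight, ← Finset.sum_neg_distrib]
  refine Finset.sum_congr rfl fun m hm => ?_
  rw [sum_signedMultinomial_erase, neg_neg]
  rintro rfl
  simp [mem_partsIn] at hm
  omega

lemma CS_eq_sum_partitionWeight (n : ℕ) :
    CS S n = ∑ j ∈ range (n + 1), partitionWeight S j := by
  refine Finset.sum_congr rfl fun j hj => ?_
  rw [partitionWeight, partsIn, Finset.sum_image fun p _ q _ h => Nat.Partition.ext h]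
  refine Finset.sum_congr rfl fun p _ => ?_
  rw [signedMultinomial]
  congr 1
  refine (Finset.prod_subset (fun i hi => ?_) fun i _ hi => ?_).symm
  · have him : i ∈ p.parts := Multiset.mem_toFinset.mp hi
    have : i ≤ j := p.parts_sum ▸ Multiset.le_sum_of_mem him
    exact mem_Icc.mpr ⟨p.parts_pos him, by rw [mem_range] at hj; omega⟩
  · rw [Multiset.count_eq_zero_of_notMem (by simpa using hi), Nat.factorial_zero, Nat.cast_one]

end PartitionWeight

/-- The power series `1 + ∑_{n ∈ S} Xⁿ` (for `0 ∉ S`). -/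
noncomputable def fSeries (R : Type*) [Semiring R] (S : Set ℕ) : R⟦X⟧ :=
  mk fun n => if n = 0 ∨ n ∈ S then 1 else 0

lemma fSeries_mul_partitionWeight (S : Set ℕ) : fSeries ℚ S * mk (partitionWeight S) = 1 := by
  ext n
  rw [coeff_mul, Finset.Nat.sum_antidiagonal_eq_sum_range_succ (fun i j =>
    coeff i (fSeries ℚ S) * coeff j (mk (partitionWeight S))), coeff_one]
  simp only [fSeries, coeff_mk]
  rcases Nat.eq_zero_or_pos n with rfl | hn
  · simp only [Nat.succ_eq_add_one, zero_add, sum_range_one]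
    simp [partitionWeight_zero]
  have hrange : range (n + 1) = insert 0 (Icc 1 n) := by
    ext i; simp only [mem_range, mem_insert, mem_Icc]; omega
  rw [hrange, sum_insert (by simp), if_neg hn.ne', if_pos (Or.inl rfl), one_mul, Nat.sub_zero,
    partitionWeight_eq_neg_sum hn, sum_filter, neg_add_eq_zero]
  refine sum_congr rfl fun i hi => ?_
  have hi0 : i ≠ 0 := by rw [mem_Icc] at hi; omega
  simp [hi0]

section ScalarPowerSeries

open FormalMultilinearSeries

variable {a : ℕ → ℂ} {R : ℝ≥0}

lemma le_radius_ofScalars_of_summable (h : ∀ z : ℂ, ‖z‖ < R → Summable fun n => a n * z ^ n) :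
    (R : ℝ≥0∞) ≤ (ofScalars ℂ a).radius := by
  refine ENNReal.le_of_forall_nnreal_lt fun r hr => ?_
  have hs := h r (by simpa using hr)
  refine (ofScalars ℂ a).le_radius_of_tendsto (l := 0) ?_
  simpa [ofScalars_norm] using hs.tendsto_atTop_zero.norm

lemma summable_norm_mul_pow_of_summable
    (h : ∀ z : ℂ, ‖z‖ < R → Summable fun n => a n * z ^ n) {z : ℂ} (hz : ‖z‖ < R) :
    Summable fun n => ‖a n * z ^ n‖ := by
  have hlt : (‖z‖₊ : ℝ≥0∞) < (ofScalars ℂ a).radius :=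
    lt_of_lt_of_le (by exact_mod_cast hz) (le_radius_ofScalars_of_summable h)
  simpa [ofScalars_norm] using (ofScalars ℂ a).summable_norm_mul_pow hlt

lemma analyticOnNhd_tsum_mul_pow (h : ∀ z : ℂ, ‖z‖ < R → Summable fun n => a n * z ^ n) :
    AnalyticOnNhd ℂ (fun z => ∑' n, a n * z ^ n) (Metric.ball 0 R) := by
  have hsum : (ofScalars ℂ a).sum = fun z => ∑' n, a n * z ^ n := by
    simpa [ofScalarsSum] using ofScalarsSum_eq_tsum (E := ℂ) a
  rw [← hsum]
  refine (ofScalars ℂ a).analyticOnNhd.mono fun z hz => ?_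
  rw [Metric.mem_ball, dist_zero_right] at hz
  rw [Metric.mem_eball, edist_zero_right]
  exact lt_of_lt_of_le (by exact_mod_cast hz) (le_radius_ofScalars_of_summable h)

end ScalarPowerSeries

namespace PowerSeries

lemma eq_of_hasSum_coeff_mul_pow {𝕜 : Type*} [NontriviallyNormedField 𝕜] {p q : 𝕜⟦X⟧}
    {f : 𝕜 → 𝕜} (hp : ∀ᶠ z in 𝓝 0, HasSum (fun n => coeff n p * z ^ n) (f z))
    (hq : ∀ᶠ z in 𝓝 0, HasSum (fun n => coeff n q * z ^ n) (f z)) : p = q := by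
  have hasFPowerSeriesAt (χ : 𝕜⟦X⟧)
      (hχ : ∀ᶠ z in 𝓝 0, HasSum (fun n => coeff n χ * z ^ n) (f z)) :
      HasFPowerSeriesAt f (FormalMultilinearSeries.ofScalars 𝕜 fun n => coeff n χ) 0 :=
    hasFPowerSeriesAt_iff.mpr <| hχ.mono fun z hz => by
      simpa [FormalMultilinearSeries.coeff_ofScalars, mul_comm] using hz
  ext n
  exact congrFun (FormalMultilinearSeries.ofScalars_series_injective 𝕜 𝕜
    ((hasFPowerSeriesAt p hp).eq_formalMultilinearSeries (hasFPowerSeriesAt q hq))) n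

lemma hasSum_coeff_mul_mul_pow {R : Type*} [NormedCommRing R] [CompleteSpace R] {p q : R⟦X⟧}
    {z : R} (hp : Summable fun n => ‖coeff n p * z ^ n‖)
    (hq : Summable fun n => ‖coeff n q * z ^ n‖) :
    HasSum (fun n => coeff n (p * q) * z ^ n)
      ((∑' n, coeff n p * z ^ n) * ∑' n, coeff n q * z ^ n) := by
  have hcauchy (n : ℕ) : coeff n (p * q) * z ^ n =
      ∑ kl ∈ antidiagonal n, coeff kl.1 p * z ^ kl.1 * (coeff kl.2 q * z ^ kl.2) := by
    rw [coeff_mul, sum_mul]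
    refine sum_congr rfl fun kl hkl => ?_
    rw [← mem_antidiagonal.mp hkl, pow_add]
    ring
  simp only [hcauchy]
  rw [tsum_mul_tsum_eq_tsum_sum_antidiagonal_of_summable_norm hp hq]
  exact (summable_norm_sum_mul_antidiagonal_of_summable_norm hp hq).of_norm.hasSum

/-- `1 / F` is holomorphic on the disk, and by uniqueness of power series its Taylor series at `0`
is the formal inverse `Ψ`. -/
lemma hasSum_coeff_mul_pow_of_mul_eq_one {Φ Ψ : ℂ⟦X⟧} {F : ℂ → ℂ} {R : ℝ≥0}
    (hΦ : ∀ z : ℂ, ‖z‖ < R → HasSum (fun n => coeff n Φ * z ^ n) (F z))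
    (hF : ∀ z : ℂ, ‖z‖ < R → F z ≠ 0) (hΦΨ : Φ * Ψ = 1) {z : ℂ} (hz : ‖z‖ < R) :
    HasSum (fun n => coeff n Ψ * z ^ n) (F z)⁻¹ := by
  have hdiff : DifferentiableOn ℂ (fun w => (F w)⁻¹) (Metric.ball 0 R) := by
    refine DifferentiableOn.inv ?_ fun w hw => hF w (by simpa using hw)
    refine (analyticOnNhd_tsum_mul_pow fun w hw => (hΦ w hw).summable).differentiableOn.congr
      fun w hw => (hΦ w (by simpa using hw)).tsum_eq.symm
  set Γ : ℂ⟦X⟧ := mk fun n => (n ! : ℂ)⁻¹ * iteratedDeriv n (fun w => (F w)⁻¹) 0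
  have hΓ (w : ℂ) (hw : ‖w‖ < R) : HasSum (fun n => coeff n Γ * w ^ n) (F w)⁻¹ := by
    have h := Complex.hasSum_taylorSeries_on_ball hdiff (z := w) (by simpa using hw)
    simp only [sub_zero, smul_eq_mul] at h
    refine h.congr_fun fun n => ?_
    simp only [Γ, coeff_mk]
    ring
  have hball : ∀ᶠ w in 𝓝 (0 : ℂ), ‖w‖ < R :=
    Metric.eventually_nhds_iff.mpr ⟨R, (norm_nonneg z).trans_lt hz, fun _ h => by simpa using h⟩
  have hone (w : ℂ) : HasSum (fun n => coeff n (1 : ℂ⟦X⟧) * w ^ n) 1 := by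
    convert hasSum_ite_eq 0 (1 : ℂ) using 2 with n
    split_ifs with hn <;> simp [coeff_one, hn]
  have hΦΓ : Φ * Γ = 1 := by
    refine eq_of_hasSum_coeff_mul_pow (f := fun _ => 1) (hball.mono fun w hw => ?_)
      (Eventually.of_forall hone)
    have h := hasSum_coeff_mul_mul_pow
      (summable_norm_mul_pow_of_summable (fun w hw => (hΦ w hw).summable) hw)
      (summable_norm_mul_pow_of_summable (fun w hw => (hΓ w hw).summable) hw)
    rwa [(hΦ w hw).tsum_eq, (hΓ w hw).tsum_eq, mul_inv_cancel₀ (hF w hw)] at h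
  rw [left_inv_eq_right_inv (b := Ψ) (by rwa [mul_comm]) hΦΓ]
  exact hΓ z hz

end PowerSeries

lemma hasSum_sum_range_mul_pow {𝕜 : Type*} [NormedField 𝕜] [CompleteSpace 𝕜] {a : ℕ → 𝕜} {z : 𝕜}
    (ha : Summable fun n => ‖a n * z ^ n‖) (hz : ‖z‖ < 1) :
    HasSum (fun n => (∑ k ∈ range (n + 1), a k) * z ^ n) ((1 - z)⁻¹ * ∑' n, a n * z ^ n) := by
  have h := hasSum_sum_range_mul_of_summable_norm (g := fun n => z ^ n) ha
    (by simpa [norm_pow] using summable_geometric_of_lt_one (norm_nonneg z) hz)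
  rw [tsum_geometric_of_norm_lt_one hz, mul_comm] at h
  refine h.congr_fun fun n => ?_
  rw [sum_mul]
  refine sum_congr rfl fun k hk => ?_
  rw [mul_assoc, ← pow_add, Nat.add_sub_cancel' (Nat.lt_succ_iff.mp (mem_range.mp hk))]

lemma exists_abs_le_add_mul {e : ℕ → ℝ} (he : Tendsto (fun N => e N / N) atTop (𝓝 0)) {ε : ℝ}
    (hε : 0 < ε) : ∃ C, ∀ N, |e N| ≤ C + ε * N := by
  have habs : Tendsto (fun N => |e N / N|) atTop (𝓝 0) := by simpa using he.abs
  obtain ⟨N₀, hN₀⟩ := eventually_atTop.mp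
    ((habs.eventually (gt_mem_nhds hε)).and (eventually_ge_atTop 1))
  refine ⟨∑ k ∈ range N₀, |e k|, fun N => ?_⟩
  have hsum_nonneg : 0 ≤ ∑ k ∈ range N₀, |e k| := sum_nonneg fun k _ => abs_nonneg _
  rcases lt_or_ge N N₀ with hN | hN
  · have := single_le_sum (f := fun k => |e k|) (fun k _ => abs_nonneg _) (mem_range.mpr hN)
    nlinarith [Nat.cast_nonneg (α := ℝ) N]
  · obtain ⟨hlt, h1⟩ := hN₀ N hN
    have hNpos : (0 : ℝ) < N := by exact_mod_cast h1
    rw [abs_div, Nat.abs_cast, div_lt_iff₀ hNpos] at hlt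
    linarith

lemma summable_mul_pow_and_abs_tsum_le {e : ℕ → ℝ} {C ε q : ℝ} (hb : ∀ N, |e N| ≤ C + ε * N)
    (hq0 : 0 ≤ q) (hq1 : q < 1) :
    Summable (fun N => e N * q ^ N) ∧ |(1 - q) ^ 2 * ∑' N, e N * q ^ N| ≤ C * (1 - q) + ε * q := by
  have hq : ‖q‖ < 1 := by rwa [Real.norm_eq_abs, abs_of_nonneg hq0]
  have hmajorant :
      HasSum (fun N : ℕ => (C + ε * N) * q ^ N) (C * (1 - q)⁻¹ + ε * (q / (1 - q) ^ 2)) := by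
    refine (((hasSum_geometric_of_lt_one hq0 hq1).mul_left C).add
      ((hasSum_coe_mul_geometric_of_norm_lt_one hq).mul_left ε)).congr_fun fun N => by ring
  have hle (N : ℕ) : ‖e N * q ^ N‖ ≤ (C + ε * N) * q ^ N := by
    rw [norm_mul, norm_pow, Real.norm_eq_abs, Real.norm_eq_abs, abs_of_nonneg hq0]
    exact mul_le_mul_of_nonneg_right (hb N) (by positivity)
  refine ⟨.of_norm_bounded hmajorant.summable hle, ?_⟩
  have hpos : 0 < 1 - q := sub_pos.mpr hq1
  calc |(1 - q) ^ 2 * ∑' N, e N * q ^ N|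
      = (1 - q) ^ 2 * ‖∑' N, e N * q ^ N‖ := by
        rw [abs_mul, abs_of_pos (by positivity), Real.norm_eq_abs]
    _ ≤ (1 - q) ^ 2 * (C * (1 - q)⁻¹ + ε * (q / (1 - q) ^ 2)) :=
        mul_le_mul_of_nonneg_left (tsum_of_norm_bounded hmajorant hle) (by positivity)
    _ = C * (1 - q) + ε * q := by field_simp

lemma tendsto_one_sub_sq_mul_tsum_of_tendsto_div_zero {e : ℕ → ℝ}
    (he : Tendsto (fun N => e N / N) atTop (𝓝 0)) :
    Tendsto (fun q => (1 - q) ^ 2 * ∑' N, e N * q ^ N) (𝓝[<] 1) (𝓝 0) := by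
  refine Metric.tendsto_nhds.mpr fun ε hε => ?_
  obtain ⟨C, hC⟩ := exists_abs_le_add_mul he (half_pos hε)
  have hC0 : Tendsto (fun q : ℝ => C * (1 - q)) (𝓝[<] 1) (𝓝 0) := by
    have : Tendsto (fun q : ℝ => C * (1 - q)) (𝓝 1) (𝓝 (C * (1 - 1))) :=
      (continuous_const.mul (continuous_const.sub continuous_id)).tendsto 1
    simpa using this.mono_left nhdsWithin_le_nhds
  filter_upwards [Ioo_mem_nhdsLT zero_lt_one, hC0.eventually (gt_mem_nhds (half_pos hε))]
    with q ⟨hq0, hq1⟩ hCq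
  rw [Real.dist_eq, sub_zero]
  calc _ ≤ C * (1 - q) + ε / 2 * q := (summable_mul_pow_and_abs_tsum_le hC hq0.le hq1).2
    _ < ε := by nlinarith

lemma tendsto_one_sub_sq_mul_tsum {u : ℕ → ℝ} {d : ℝ}
    (hu : Tendsto (fun N => u N / N) atTop (𝓝 d)) :
    Tendsto (fun q => (1 - q) ^ 2 * ∑' N, u N * q ^ N) (𝓝[<] 1) (𝓝 d) := by
  set e : ℕ → ℝ := fun N => u N - d * N
  have he : Tendsto (fun N => e N / N) atTop (𝓝 0) := by
    refine (by simpa using hu.sub_const d : Tendsto (fun N => u N / N - d) atTop (𝓝 0)).congr'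
      ((eventually_ne_atTop 0).mono fun N hN => ?_)
    simp only [e]
    field_simp
  obtain ⟨C, hC⟩ := exists_abs_le_add_mul he one_pos
  have hsplit : ∀ᶠ q in 𝓝[<] (1 : ℝ),
      (1 - q) ^ 2 * ∑' N, e N * q ^ N + d * q = (1 - q) ^ 2 * ∑' N, u N * q ^ N := by
    filter_upwards [Ioo_mem_nhdsLT zero_lt_one] with q ⟨hq0, hq1⟩
    have hN := hasSum_coe_mul_geometric_of_norm_lt_one
      (by rwa [Real.norm_eq_abs, abs_of_pos hq0] : ‖q‖ < 1)
    have hu : HasSum (fun N => u N * q ^ N) (∑' N, e N * q ^ N + d * (q / (1 - q) ^ 2)) := by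
      refine ((summable_mul_pow_and_abs_tsum_le hC hq0.le hq1).1.hasSum.add
        (hN.mul_left d)).congr_fun fun N => ?_
      simp only [e]
      ring
    rw [hu.tsum_eq]
    have : (1 - q) ≠ 0 := (sub_pos.mpr hq1).ne'
    field_simp
  have hlin : Tendsto (fun q : ℝ => d * q) (𝓝[<] 1) (𝓝 d) := by
    simpa using ((continuous_const_mul d).tendsto 1).mono_left nhdsWithin_le_nhds
  simpa using ((tendsto_one_sub_sq_mul_tsum_of_tendsto_div_zero he).add hlin).congr' hsplit

section GeneratingFunction

variable {S : Set ℕ}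

noncomputable def fS {𝕜 : Type*} [NormedField 𝕜] (S : Set ℕ) (z : 𝕜) : 𝕜 :=
  1 + ∑' n : ℕ, if n ∈ S then z ^ n else 0

lemma coeff_fSeries {R : Type*} [Semiring R] (hS0 : 0 ∉ S) (n : ℕ) :
    coeff n (fSeries R S) = (if n = 0 then 1 else 0) + if n ∈ S then 1 else 0 := by
  rcases eq_or_ne n 0 with rfl | hn
  · simp [fSeries, hS0]
  · simp [fSeries, hn]

lemma hasSum_fSeries {𝕜 : Type*} [NormedField 𝕜] [CompleteSpace 𝕜] (hS0 : 0 ∉ S) {z : 𝕜}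
    (hz : ‖z‖ < 1) : HasSum (fun n => coeff n (fSeries 𝕜 S) * z ^ n) (fS S z) := by
  have hS : Summable fun n : ℕ => if n ∈ S then z ^ n else 0 :=
    .of_norm_bounded (summable_geometric_of_lt_one (norm_nonneg z) hz) fun n => by
      split_ifs <;> simp [norm_pow]
  refine ((hasSum_ite_eq 0 1).add hS.hasSum).congr_fun fun n => ?_
  rw [coeff_fSeries hS0]
  split_ifs <;> simp_all

lemma ofReal_fS (q : ℝ) : ((fS S q : ℝ) : ℂ) = fS S (q : ℂ) := by
  simp only [fS, Complex.ofReal_add, Complex.ofReal_one, Complex.ofReal_tsum]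
  congr 1
  refine tsum_congr fun n => ?_
  split_ifs <;> simp

lemma tendsto_one_sub_mul_fS (hS0 : 0 ∉ S) {d : ℝ}
    (hd : Tendsto (fun N : ℕ => (#((range (N + 1)).filter (· ∈ S)) : ℝ) / N) atTop (𝓝 d)) :
    Tendsto (fun q : ℝ => (1 - q) * fS S q) (𝓝[<] 1) (𝓝 d) := by
  set u : ℕ → ℝ := fun N => ∑ n ∈ range (N + 1), coeff n (fSeries ℝ S)
  have hu : Tendsto (fun N => u N / N) atTop (𝓝 d) := by
    have := (tendsto_one_div_atTop_nhds_zero_nat (𝕜 := ℝ)).add hd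
    rw [zero_add] at this
    refine this.congr fun N => ?_
    simp only [u, coeff_fSeries hS0, sum_add_distrib, sum_ite_eq', mem_range, sum_boole]
    simp [add_div]
  refine (tendsto_one_sub_sq_mul_tsum hu).congr' ?_
  filter_upwards [Ioo_mem_nhdsLT zero_lt_one] with q ⟨hq0, hq1⟩
  have hq : ‖q‖ < 1 := by rwa [Real.norm_eq_abs, abs_of_pos hq0]
  have hf := hasSum_fSeries hS0 hq
  have habs : Summable fun n => ‖coeff n (fSeries ℝ S) * q ^ n‖ := hf.summable.norm
  rw [(hasSum_sum_range_mul_pow habs hq).tsum_eq, hf.tsum_eq]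
  have : 1 - q ≠ 0 := (sub_pos.mpr hq1).ne'
  field_simp

lemma hasSum_partitionWeight_mul_pow (hS0 : 0 ∉ S) (hzero : ∀ z : ℂ, ‖z‖ < 1 → fS S z ≠ 0)
    {z : ℂ} (hz : ‖z‖ < 1) :
    HasSum (fun n => (partitionWeight S n : ℂ) * z ^ n) (fS S z)⁻¹ := by
  have hmap : map (Rat.castHom ℂ) (fSeries ℚ S) = fSeries ℂ S := by
    ext n
    simp only [fSeries, coeff_map, coeff_mk]
    split_ifs <;> simp
  have hinv : fSeries ℂ S * map (Rat.castHom ℂ) (mk (partitionWeight S)) = 1 := by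
    rw [← hmap, ← map_mul, fSeries_mul_partitionWeight, map_one]
  simpa using PowerSeries.hasSum_coeff_mul_pow_of_mul_eq_one (R := 1)
    (fun w hw => hasSum_fSeries hS0 (by simpa using hw)) (fun w hw => hzero w (by simpa using hw))
    hinv (by simpa using hz)

lemma hasSum_CS_mul_pow (hS0 : 0 ∉ S) (hzero : ∀ z : ℂ, ‖z‖ < 1 → fS S z ≠ 0) {z : ℂ}
    (hz : ‖z‖ < 1) : HasSum (fun n => (CS S n : ℂ) * z ^ n) ((1 - z) * fS S z)⁻¹ := by
  have habs := summable_norm_mul_pow_of_summable (R := 1)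
    (fun w hw => (hasSum_partitionWeight_mul_pow hS0 hzero (by simpa using hw)).summable)
    (by simpa using hz)
  have h := hasSum_sum_range_mul_pow habs hz
  rw [(hasSum_partitionWeight_mul_pow hS0 hzero hz).tsum_eq, ← mul_inv] at h
  simpa [CS_eq_sum_partitionWeight] using h

lemma tsum_CS_mul_pow (hS0 : 0 ∉ S) (hzero : ∀ z : ℂ, ‖z‖ < 1 → fS S z ≠ 0) {q : ℝ}
    (hq : |q| < 1) : ∑' n, (CS S n : ℝ) * q ^ n = ((1 - q) * fS S q)⁻¹ := by
  have h := hasSum_CS_mul_pow hS0 hzero (z := q) (by simpa using hq)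
  rw [← ofReal_fS, ← Complex.ofReal_one, ← Complex.ofReal_sub, ← Complex.ofReal_mul,
    ← Complex.ofReal_inv] at h
  exact (Complex.hasSum_ofReal.mp (by simpa using h)).tsum_eq

end GeneratingFunction

/-- if `S` has positive arithmetic density `d` and
`f_S(q) = 1 + ∑_{n ∈ S} qⁿ` is zero-free on the open unit disk, then
`∑ C_S(n) qⁿ → 1/d` as `q → 1⁻` radially. -/
theorem stmt5 (S : Set ℕ) (hS : ∀ m ∈ S, 0 < m) (d : ℝ)
    (hd : Tendsto
      (fun N : ℕ => (((Finset.range (N + 1)).filter (fun n => n ∈ S)).card : ℝ) / N)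
      atTop (nhds d))
    (hdpos : 0 < d)
    (hzero : ∀ q : ℂ, ‖q‖ < 1 →
      (1 + ∑' n : ℕ, (if n ∈ S then q ^ n else 0)) ≠ 0) :
    Tendsto (fun q : ℝ => ∑' n : ℕ, (CS S n : ℝ) * q ^ n)
      (nhdsWithin 1 (Set.Iio 1)) (nhds (1 / d)) := by
  have hS0 : 0 ∉ S := fun h => (hS 0 h).false
  rw [one_div]
  refine ((tendsto_one_sub_mul_fS hS0 hd).inv₀ hdpos.ne').congr' ?_
  filter_upwards [Ioo_mem_nhdsLT (show (-1 : ℝ) < 1 by norm_num)] with q hq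
  exact (tsum_CS_mul_pow hS0 hzero (abs_lt.mpr hq)).symm
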